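/- arXiv:1907.12097 — 5 statements merged into one kernel-verified Lean document; each statement's English description precedes it below -/
import Mathlib

section
/- For every integer t ≥ 1, the class number of the imaginary quadratic field ℚ(√(1 − 2916t³)) is divisible by 3. -/
/-!
Put `d = 1 - 4 (9t)³` and `θ = (1 + √d) / 2`, so that `θ (1 - θ) = (9t)³` with
`θ + (1 - θ) = 1`. Then `I = (θ, 9t)` satisfies `I³ = (θ)`. Since `-d` is neither a rational
square nor three times one, the only units of `𝓞 K` are `±1`; so if `I` were principal, `θ`
would be the cube of an algebraic integer `b`. Writing `b² = S b - P` with `S, P ∈ ℤ` and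
comparing rational parts in `b³ = θ` gives `S³ - 3PS = 1`, which forces `P = 0`, i.e. `b`
rational: absurd. Hence the class of `I` has order `3`.
-/

open Polynomial NumberField

theorem Int.eq_zero_of_pow_three_sub_three_mul_mul_eq_one {s p : ℤ} (h : s ^ 3 - 3 * p * s = 1) :
    p = 0 := by
  have hs : s ∣ 1 := ⟨s ^ 2 - 3 * p, by linear_combination -h⟩
  rcases Int.isUnit_iff.1 (isUnit_of_dvd_one hs) with rfl | rfl <;> omega

theorem Int.exists_eq_mul_sq_of_mul_sq_eq {c D : ℤ} (hc : Squarefree c) {q : ℚ}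
    (h : D * q ^ 2 = c) : ∃ e : ℤ, D = c * e ^ 2 := by
  have hden : (q.den : ℚ) ≠ 0 := by positivity
  have hZ : D * q.num ^ 2 = c * (q.den : ℤ) ^ 2 := by
    rw [← Rat.num_div_den q] at h
    field_simp at h
    exact_mod_cast h.trans (mul_comm _ _)
  have hcop : IsCoprime q.num (q.den : ℤ) := by
    rw [Int.isCoprime_iff_gcd_eq_one]; exact q.reduced
  have hnum : IsUnit q.num := by
    refine hc _ ?_
    rw [← sq]
    exact hcop.pow_left.pow_right.dvd_of_dvd_mul_right ⟨D, by rw [← hZ]; ring⟩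
  refine ⟨q.den, ?_⟩
  rcases Int.isUnit_iff.1 hnum with h1 | h1 <;> rw [h1] at hZ <;> linear_combination hZ

theorem Int.mul_sq_ne_one_of_emod_four_eq_three {D : ℤ} (hD : D % 4 = 3) (q : ℚ) :
    (D : ℚ) * q ^ 2 ≠ 1 := by
  intro h
  obtain ⟨e, he⟩ := Int.exists_eq_mul_sq_of_mul_sq_eq squarefree_one (by exact_mod_cast h)
  rcases Int.even_or_odd' e with ⟨k, rfl | rfl⟩ <;> ring_nf at he <;> omega

theorem Int.mul_sq_ne_three_of_not_dvd {D : ℤ} (hD : ¬ (3 : ℤ) ∣ D) (q : ℚ) :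
    (D : ℚ) * q ^ 2 ≠ 3 := by
  intro h
  obtain ⟨e, he⟩ := Int.exists_eq_mul_sq_of_mul_sq_eq Int.prime_three.squarefree
    (by exact_mod_cast h)
  exact hD ⟨e ^ 2, he⟩

theorem Ideal.span_pair_pow_eq_span_singleton {R : Type*} [CommRing R] {a b c : R} {n : ℕ}
    (hab : a + b = 1) (habc : a * b = c ^ n) : Ideal.span {a, c} ^ n = Ideal.span {a} := by
  apply le_antisymm
  · -- modulo `(a)` the ideal `(a, c)` becomes `(c)`, and `c ^ n = a * b` vanishes there
    rw [← Ideal.mk_ker (I := Ideal.span {a}), ← Ideal.map_eq_bot_iff_le_ker, Ideal.map_pow,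
      Ideal.map_span, Set.image_pair,
      Ideal.Quotient.eq_zero_iff_mem.2 (Ideal.mem_span_singleton_self a), Ideal.span_insert_zero,
      Ideal.span_singleton_pow, ← map_pow, ← habc,
      Ideal.Quotient.eq_zero_iff_mem.2 (Ideal.mul_mem_right b _ (Ideal.mem_span_singleton_self a)),
      Ideal.span_singleton_eq_bot.2 rfl]
  · have hcop : IsCoprime (Ideal.span {a, c} ^ n) (Ideal.span {b}) :=
      (Ideal.isCoprime_iff_exists.2 ⟨a, Ideal.subset_span (by simp), b,
        Ideal.mem_span_singleton_self b, hab⟩).pow_left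
    obtain ⟨i, hi, j, hj, hij⟩ := Ideal.isCoprime_iff_exists.1 hcop
    obtain ⟨r, rfl⟩ := Ideal.mem_span_singleton'.1 hj
    have hcn : c ^ n ∈ Ideal.span {a, c} ^ n := Ideal.pow_mem_pow (Ideal.subset_span (by simp)) n
    have h := add_mem (Ideal.mul_mem_left _ a hi) (Ideal.mul_mem_left _ r hcn)
    rwa [← habc, show a * i + r * (a * b) = a by linear_combination a * hij,
      ← Ideal.span_singleton_le_iff_mem] at h

theorem Ideal.not_isPrincipal_of_pow_eq_span_singleton {R : Type*} [CommRing R] [IsDomain R]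
    {n : ℕ} {a : R} (hunits : ∀ u : Rˣ, ∃ v : R, v ^ n = u) (ha : ∀ b : R, b ^ n ≠ a)
    {I : Ideal R} (hI : I ^ n = Ideal.span {a}) : ¬ I.IsPrincipal := by
  rintro ⟨α, rfl⟩
  rw [Ideal.submodule_span_eq, Ideal.span_singleton_pow,
    Ideal.span_singleton_eq_span_singleton] at hI
  obtain ⟨u, hu⟩ := hI
  obtain ⟨v, hv⟩ := hunits u
  exact ha (α * v) (by rw [mul_pow, hv, hu])

theorem ClassGroup.prime_dvd_card_of_pow_isPrincipal {R : Type*} [CommRing R] [IsDedekindDomain R]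
    [Fintype (ClassGroup R)] {p : ℕ} [Fact p.Prime] {I : Ideal R}
    (hI : I ≠ ⊥) (hpow : (I ^ p).IsPrincipal) (hnot : ¬ I.IsPrincipal) :
    p ∣ Fintype.card (ClassGroup R) := by
  have hI0 : I ∈ nonZeroDivisors (Ideal R) := mem_nonZeroDivisors_of_ne_zero hI
  have hp : ClassGroup.mk0 ⟨I, hI0⟩ ^ p = 1 := by
    rw [← map_pow, ClassGroup.mk0_eq_one_iff]
    exact hpow
  have hne : ClassGroup.mk0 ⟨I, hI0⟩ ≠ 1 := by
    rwa [Ne, ClassGroup.mk0_eq_one_iff]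
  exact orderOf_eq_prime hp hne ▸ orderOf_dvd_card

section QuadraticField

variable {K : Type*} [Field K] [CharZero K]

theorem exists_int_eq_of_isIntegral_of_sq_sub_mul_add_eq_zero {b : K} (hb : IsIntegral ℤ b)
    (hbQ : b ∉ (algebraMap ℚ K).range) {s p : ℚ}
    (h : b ^ 2 - algebraMap ℚ K s * b + algebraMap ℚ K p = 0) :
    (∃ S : ℤ, (S : ℚ) = s) ∧ ∃ P : ℤ, (P : ℚ) = p := by
  have hbQ' : IsIntegral ℚ b := hb.tower_top
  set f : ℚ[X] := X ^ 2 - C s * X + C p with hf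
  have hfdeg : f.natDegree = 2 := by rw [hf]; compute_degree!
  have hfmonic : f.Monic := by
    rw [Monic, leadingCoeff, hfdeg]; simp [hf]
  have hfb : aeval b f = 0 := by simpa [hf] using h
  have hmin : f = minpoly ℚ b :=
    eq_of_monic_of_dvd_of_natDegree_le (minpoly.monic hbQ') hfmonic (minpoly.dvd ℚ b hfb)
      (hfdeg ▸ (minpoly.two_le_natDegree_iff hbQ').2 hbQ)
  have hcoeff (i : ℕ) : ((minpoly ℤ b).coeff i : ℚ) = f.coeff i := by
    rw [hmin, minpoly.isIntegrallyClosed_eq_field_fractions' ℚ hb, coeff_map, eq_intCast]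
  refine ⟨⟨-(minpoly ℤ b).coeff 1, ?_⟩, ⟨(minpoly ℤ b).coeff 0, ?_⟩⟩
  · rw [Int.cast_neg, hcoeff]; simp [hf]
  · rw [hcoeff]; simp [hf]

theorem eq_one_or_eq_neg_one_of_mem_range {v w : K} (hv : IsIntegral ℤ v) (hw : IsIntegral ℤ w)
    (hvw : v * w = 1) (hvQ : v ∈ (algebraMap ℚ K).range) : v = 1 ∨ v = -1 := by
  have hinj := (algebraMap ℚ K).injective
  obtain ⟨x, rfl⟩ := hvQ
  have hx : x ≠ 0 := by rintro rfl; simp at hvw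
  have hwx : w = algebraMap ℚ K x⁻¹ := by
    rw [map_inv₀]; exact (eq_inv_of_mul_eq_one_right hvw)
  obtain ⟨X, hX⟩ := IsIntegrallyClosed.isIntegral_iff.1 ((isIntegral_algebraMap_iff hinj).1 hv)
  obtain ⟨Y, hY⟩ :=
    IsIntegrallyClosed.isIntegral_iff.1 ((isIntegral_algebraMap_iff hinj).1 (hwx ▸ hw))
  have hXY : X * Y = 1 := by
    have : (X : ℚ) * Y = 1 := by
      rw [eq_intCast] at hX hY
      rw [hX, hY, mul_inv_cancel₀ hx]
    exact_mod_cast this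
  rcases Int.eq_one_or_neg_one_of_mul_eq_one hXY with rfl | rfl <;> simp [← hX]

theorem eq_one_or_eq_neg_one_of_sq_sub_mul_add_eq_zero {v w : K} (hv : IsIntegral ℤ v)
    (hw : IsIntegral ℤ w) (hvw : v * w = 1) (hvQ : v ∉ (algebraMap ℚ K).range) {s p : ℚ}
    (h : v ^ 2 - algebraMap ℚ K s * v + algebraMap ℚ K p = 0) : p = 1 ∨ p = -1 := by
  obtain ⟨-, P, hP⟩ := exists_int_eq_of_isIntegral_of_sq_sub_mul_add_eq_zero hv hvQ h
  have hp : p ≠ 0 := by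
    rintro rfl
    rw [map_zero] at h
    exact hvQ ⟨s, by linear_combination (-w) * h + (v - algebraMap ℚ K s) * hvw⟩
  have hwQ : w ∉ (algebraMap ℚ K).range := by
    rintro ⟨q, rfl⟩
    exact hvQ ⟨q⁻¹, by rw [map_inv₀]; exact (eq_inv_of_mul_eq_one_left hvw).symm⟩
  have hw2 : w ^ 2 - algebraMap ℚ K (s / p) * w + algebraMap ℚ K (1 / p) = 0 := by
    have hp' : algebraMap ℚ K p ≠ 0 := by simpa using hp
    rw [map_div₀, map_div₀, map_one]
    field_simp
    linear_combination w ^ 2 * h - (1 + v * w - algebraMap ℚ K s * w) * hvw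
  obtain ⟨-, Q, hQ⟩ := exists_int_eq_of_isIntegral_of_sq_sub_mul_add_eq_zero hw hwQ hw2
  have hPQ : P * Q = 1 := by
    have : (P : ℚ) * Q = 1 := by rw [hP, hQ, mul_one_div_cancel hp]
    exact_mod_cast this
  rw [← hP]
  rcases Int.eq_one_or_neg_one_of_mul_eq_one hPQ with rfl | rfl <;> norm_num

variable {d : ℚ} {z : K}

theorem eq_zero_of_add_mul_eq_zero (hz : z ∉ (algebraMap ℚ K).range) {x y : ℚ}
    (h : algebraMap ℚ K x + algebraMap ℚ K y * z = 0) : x = 0 ∧ y = 0 := by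
  obtain rfl | hy := eq_or_ne y 0
  · simpa using h
  · refine absurd ⟨-x / y, ?_⟩ hz
    rw [map_div₀, map_neg, div_eq_iff (by simpa using hy)]
    linear_combination -h

theorem add_mul_notMem_range (hz : z ∉ (algebraMap ℚ K).range) {x y : ℚ} (hy : y ≠ 0) :
    algebraMap ℚ K x + algebraMap ℚ K y * z ∉ (algebraMap ℚ K).range := by
  rintro ⟨q, hq⟩
  refine hy (eq_zero_of_add_mul_eq_zero hz (x := x - q) ?_).2
  rw [map_sub, hq]; ring

theorem notMem_range_of_sq_eq_of_neg (hz2 : z ^ 2 = algebraMap ℚ K d) (hd : d < 0) :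
    z ∉ (algebraMap ℚ K).range := by
  rintro ⟨q, rfl⟩
  rw [← map_pow, (algebraMap ℚ K).injective.eq_iff] at hz2
  nlinarith [sq_nonneg q]

theorem exists_eq_add_mul_of_adjoin_eq_top (hz2 : z ^ 2 = algebraMap ℚ K d)
    (hadj : IntermediateField.adjoin ℚ {z} = ⊤) (w : K) :
    ∃ x y : ℚ, w = algebraMap ℚ K x + algebraMap ℚ K y * z := by
  have hzint : IsIntegral ℚ z := IsIntegral.of_pow two_pos (hz2 ▸ isIntegral_algebraMap)
  have hw : w ∈ Algebra.adjoin ℚ {z} := by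
    rw [← IntermediateField.adjoin_simple_toSubalgebra_of_isAlgebraic hzint.isAlgebraic, hadj]
    trivial
  induction hw using Algebra.adjoin_induction with
  | mem w hw => exact ⟨0, 1, by simp [Set.mem_singleton_iff.1 hw]⟩
  | algebraMap q => exact ⟨q, 0, by simp⟩
  | add w w' _ _ h h' =>
    obtain ⟨x, y, rfl⟩ := h
    obtain ⟨x', y', rfl⟩ := h'
    exact ⟨x + x', y + y', by simp only [map_add]; ring⟩
  | mul w w' _ _ h h' =>
    obtain ⟨x, y, rfl⟩ := h
    obtain ⟨x', y', rfl⟩ := h'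
    refine ⟨x * x' + d * y * y', x * y' + x' * y, ?_⟩
    simp only [map_add, map_mul]
    linear_combination algebraMap ℚ K y * algebraMap ℚ K y' * hz2

theorem add_mul_sq_sub_mul_add_eq_zero (hz2 : z ^ 2 = algebraMap ℚ K d) (x y : ℚ) :
    (algebraMap ℚ K x + algebraMap ℚ K y * z) ^ 2
      - algebraMap ℚ K (2 * x) * (algebraMap ℚ K x + algebraMap ℚ K y * z)
      + algebraMap ℚ K (x ^ 2 - d * y ^ 2) = 0 := by
  simp only [map_mul, map_sub, map_pow, map_ofNat]
  linear_combination algebraMap ℚ K y ^ 2 * hz2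

theorem eq_one_or_eq_neg_one_of_isIntegral_of_mul_eq_one (hz2 : z ^ 2 = algebraMap ℚ K d)
    (hadj : IntermediateField.adjoin ℚ {z} = ⊤) (hd : d < 0)
    (h1 : ∀ q : ℚ, d * q ^ 2 ≠ -1) (h3 : ∀ q : ℚ, d * q ^ 2 ≠ -3) {v w : K}
    (hv : IsIntegral ℤ v) (hw : IsIntegral ℤ w) (hvw : v * w = 1) : v = 1 ∨ v = -1 := by
  by_cases hvQ : v ∈ (algebraMap ℚ K).range
  · exact eq_one_or_eq_neg_one_of_mem_range hv hw hvw hvQ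
  exfalso
  obtain ⟨x, y, rfl⟩ := exists_eq_add_mul_of_adjoin_eq_top hz2 hadj v
  have hy : y ≠ 0 := by rintro rfl; exact hvQ ⟨x, by simp⟩
  have hrel := add_mul_sq_sub_mul_add_eq_zero hz2 x y
  obtain ⟨⟨S, hS⟩, -⟩ := exists_int_eq_of_isIntegral_of_sq_sub_mul_add_eq_zero hv hvQ hrel
  have hdy : d * y ^ 2 < 0 := mul_neg_of_neg_of_pos hd (by positivity)
  have hnorm : x ^ 2 - d * y ^ 2 = 1 := by
    rcases eq_one_or_eq_neg_one_of_sq_sub_mul_add_eq_zero hv hw hvw hvQ hrel with h | h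
    · exact h
    · nlinarith [sq_nonneg x]
  have hS2 : S ^ 2 < 4 := by
    have : (S : ℚ) ^ 2 < 4 := by rw [hS]; nlinarith
    exact_mod_cast this
  -- the norm is `1` and `2x ∈ ℤ`, so `x ∈ {0, ±1/2}` and `d y² ∈ {-1, -3/4}`
  have hSlb : -2 < S := by nlinarith
  have hSub : S < 2 := by nlinarith
  interval_cases S
  · exact h3 (2 * y) (by push_cast at hS; nlinarith)
  · exact h1 y (by push_cast at hS; nlinarith)
  · exact h3 (2 * y) (by push_cast at hS; nlinarith)

theorem pow_three_ne_one_add_div_two (hz2 : z ^ 2 = algebraMap ℚ K d)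
    (hadj : IntermediateField.adjoin ℚ {z} = ⊤) (hz : z ∉ (algebraMap ℚ K).range) {b : K}
    (hb : IsIntegral ℤ b) : b ^ 3 ≠ (1 + z) / 2 := by
  intro hb3
  have hbQ : b ∉ (algebraMap ℚ K).range := by
    rintro ⟨q, rfl⟩
    refine add_mul_notMem_range hz (x := 1 / 2) one_half_pos.ne' ⟨q ^ 3, ?_⟩
    rw [map_pow, hb3, map_div₀, map_one, map_ofNat]; ring
  obtain ⟨x, y, rfl⟩ := exists_eq_add_mul_of_adjoin_eq_top hz2 hadj b
  have hrel := add_mul_sq_sub_mul_add_eq_zero hz2 x y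
  obtain ⟨⟨S, hS⟩, P, hP⟩ :=
    exists_int_eq_of_isIntegral_of_sq_sub_mul_add_eq_zero hb hbQ hrel
  rw [← hS, ← hP] at hrel
  -- `b³ = (S² - P) b - S P`; compare its rational part with that of `(1 + z) / 2`
  have hcoord := eq_zero_of_add_mul_eq_zero hz
    (x := (S ^ 2 - P) * x - S * P - 1 / 2) (y := (S ^ 2 - P) * y - 1 / 2) (by
      simp only [map_sub, map_mul, map_pow, map_intCast, map_div₀, map_one, map_ofNat] at hrel ⊢
      linear_combination hb3 - (algebraMap ℚ K x + algebraMap ℚ K y * z + S) * hrel)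
  have hSP : S ^ 3 - 3 * P * S = 1 := by
    have : (S : ℚ) ^ 3 - 3 * P * S = 1 := by
      linear_combination 2 * hcoord.1 + ((S : ℚ) ^ 2 - P) * hS
    exact_mod_cast this
  rw [Int.eq_zero_of_pow_three_sub_three_mul_mul_eq_one hSP, Int.cast_zero, map_zero] at hrel
  set b := algebraMap ℚ K x + algebraMap ℚ K y * z
  obtain h0 | hS0 :=
    mul_eq_zero.1 (show b * (b - algebraMap ℚ K S) = 0 by linear_combination hrel)
  · exact hbQ ⟨0, by rw [h0, map_zero]⟩
  · exact hbQ ⟨S, (sub_eq_zero.1 hS0).symm⟩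

theorem one_add_div_two_mul_one_sub {m : ℤ} (hz : z ^ 2 = 1 - 4 * m) :
    (1 + z) / 2 * (1 - (1 + z) / 2) = m := by
  linear_combination -hz / 4

theorem isIntegral_one_add_div_two {m : ℤ} (hz : z ^ 2 = 1 - 4 * m) :
    IsIntegral ℤ ((1 + z) / 2) :=
  ⟨X ^ 2 - X + C m, by monicity!, by
    simp only [eval₂_add, eval₂_sub, eval₂_pow, eval₂_X, eval₂_C, algebraMap_int_eq,
      Int.coe_castRingHom]
    linear_combination -one_add_div_two_mul_one_sub hz⟩

theorem NumberField.RingOfIntegers.units_eq_one_or (hz2 : z ^ 2 = algebraMap ℚ K d)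
    (hadj : IntermediateField.adjoin ℚ {z} = ⊤) (hd : d < 0)
    (h1 : ∀ q : ℚ, d * q ^ 2 ≠ -1) (h3 : ∀ q : ℚ, d * q ^ 2 ≠ -3) (u : (𝓞 K)ˣ) :
    u = 1 ∨ u = -1 := by
  have hu := eq_one_or_eq_neg_one_of_isIntegral_of_mul_eq_one hz2 hadj hd h1 h3
    (RingOfIntegers.isIntegral_coe u) (RingOfIntegers.isIntegral_coe ↑u⁻¹)
    (by rw [← map_mul, Units.mul_inv, map_one])
  rcases hu with hu | hu
  · exact Or.inl (Units.ext (RingOfIntegers.ext (by simpa using hu)))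
  · exact Or.inr (Units.ext (RingOfIntegers.ext (by simpa using hu)))

end QuadraticField

/-- For every integer `t ≥ 1`, the class number of the imaginary quadratic
field `ℚ(√(1 − 2916t³))` is divisible by `3`.  The quadratic field is encoded
as any number field `K` generated over `ℚ` by a square root `z` of
`1 − 2916t³`. -/
theorem stmt_2 (t : ℤ) (ht : 1 ≤ t) :
    ∀ (K : Type) [Field K] [NumberField K] (z : K),
      z ^ 2 = ((1 - 2916 * t ^ 3 : ℤ) : K) →
      IntermediateField.adjoin ℚ {z} = ⊤ →
      3 ∣ NumberField.classNumber K := by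
  intro K _ _ z hz2 hadj
  set D : ℤ := 2916 * t ^ 3 - 1 with hD
  have hz : z ^ 2 = algebraMap ℚ K (-D) := by
    rw [map_neg, map_intCast, hz2, hD]; push_cast; ring
  have hd : -(D : ℚ) < 0 := by
    have : 0 < D := by nlinarith [one_le_pow₀ (n := 3) ht]
    simpa using this
  have h1 (q : ℚ) : -(D : ℚ) * q ^ 2 ≠ -1 := fun h ↦
    Int.mul_sq_ne_one_of_emod_four_eq_three (D := D) (by omega) q (by linear_combination -h)
  have h3 (q : ℚ) : -(D : ℚ) * q ^ 2 ≠ -3 := fun h ↦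
    Int.mul_sq_ne_three_of_not_dvd (D := D) (by omega) q (by linear_combination -h)
  have hz' : z ^ 2 = 1 - 4 * (((9 * t) ^ 3 : ℤ) : K) := by rw [hz2]; push_cast; ring
  set θ : 𝓞 K := ⟨(1 + z) / 2, isIntegral_one_add_div_two hz'⟩
  have hθ : θ * (1 - θ) = ((9 * t : ℤ) : 𝓞 K) ^ 3 :=
    RingOfIntegers.coe_injective (by
      simp only [map_mul, map_sub, map_one, map_pow, map_intCast]
      exact_mod_cast one_add_div_two_mul_one_sub hz')
  have hI3 := Ideal.span_pair_pow_eq_span_singleton (add_sub_cancel θ 1) hθ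
  refine ClassGroup.prime_dvd_card_of_pow_isPrincipal (p := 3) ?_ ⟨θ, hI3⟩
    (Ideal.not_isPrincipal_of_pow_eq_span_singleton (fun u ↦ ⟨u, ?_⟩) (fun b hb ↦ ?_) hI3)
  · intro hI
    have hM := Ideal.span_eq_bot.1 hI _ (Set.mem_insert_of_mem θ rfl)
    exact (show 9 * t ≠ 0 by omega) (Int.cast_eq_zero.1 hM)
  · rcases RingOfIntegers.units_eq_one_or hz hadj hd h1 h3 u with rfl | rfl <;> norm_num
  · exact pow_three_ne_one_add_div_two hz hadj (notMem_range_of_sq_eq_of_neg hz hd)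
      (RingOfIntegers.isIntegral_coe b) (by rw [← map_pow, hb]; rfl)
end

section
/- For every non-zero integer t, the polynomial f(X) = X³ − 3(108t + 1)X − 2 is irreducible over ℚ. -/
open Polynomial

/-- For every non-zero integer `t`, the polynomial
`f(X) = X³ − 3(108t + 1)X − 2` is irreducible over `ℚ`. -/
theorem stmt_9 (t : ℤ) (ht : t ≠ 0) :
    Irreducible
      ((X ^ 3 - C (3 * (108 * t + 1)) * X - C 2 : ℤ[X]).map
        (Int.castRingHom ℚ)) := by
  set p : ℤ[X] := X ^ 3 - C (3 * (108 * t + 1)) * X - C 2 with hp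
  have hmonic : p.Monic := by
    unfold p
    monicity!
  rw [show Int.castRingHom ℚ = algebraMap ℤ ℚ from rfl, ← hmonic.irreducible_iff_irreducible_map_fraction_map]
  have hdeg : p.natDegree = 3 := by
    unfold p
    compute_degree!
  rw [hmonic.irreducible_iff_roots_eq_zero_of_degree_le_three (by omega) (by omega)]
  rw [Multiset.eq_zero_iff_forall_notMem]
  intro r hr
  rw [mem_roots hmonic.ne_zero, IsRoot, hp] at hr
  simp only [eval_sub, eval_pow, eval_X, eval_mul, eval_C] at hr
  have hdvd : r ∣ 2 := ⟨r ^ 2 - 3 * (108 * t + 1), by ring_nf; linarith⟩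
  have h1 : r ≤ 2 := Int.le_of_dvd (by norm_num) hdvd
  have h2 : -2 ≤ r := by
    have := Int.le_of_dvd (show (0:ℤ) < 2 by norm_num) (hdvd.neg_left)
    omega
  interval_cases r <;> norm_num at hr <;> omega
end

section
/- For every integer t ≥ 1, the polynomial f(X) = X³ − 27tX − 1 is irreducible over ℚ, and its discriminant equals 27(2916t³ − 1), which is not a perfect square. -/
/-!
A rational root of the monic cubic would be an integer root, hence a unit, and `±1` is a root of
`X³ - aX - 1` only for `a = 0` or `a = 2`. The discriminant is `-27` modulo `81`, and `-27` is not a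
square modulo `81`.
-/

open Polynomial

theorem Polynomial.Monic.irreducible_map_rat_of_forall_not_isRoot {f : ℤ[X]} (hf : f.Monic)
    (hdeg₂ : 2 ≤ f.natDegree) (hdeg₃ : f.natDegree ≤ 3) (hroot : ∀ z, ¬ f.IsRoot z) :
    Irreducible (f.map (Int.castRingHom ℚ)) := by
  refine (IsPrimitive.Int.irreducible_iff_irreducible_map_cast hf.isPrimitive).mp ?_
  rw [hf.irreducible_iff_roots_eq_zero_of_degree_le_three hdeg₂ hdeg₃,
    Multiset.eq_zero_iff_forall_notMem]
  exact fun z hz => hroot z ((mem_roots hf.ne_zero).mp hz)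

lemma not_isRoot_X_pow_three_sub_C_mul_X_sub_one {a : ℤ} (ha₀ : a ≠ 0) (ha₂ : a ≠ 2) (z : ℤ) :
    ¬ (X ^ 3 - C a * X - C 1 : ℤ[X]).IsRoot z := by
  intro hz
  simp only [IsRoot, eval_sub, eval_mul, eval_pow, eval_X, eval_C] at hz
  have hunit : IsUnit z := .of_mul_eq_one (z ^ 2 - a) (by linear_combination hz)
  rcases Int.isUnit_iff.mp hunit with rfl | rfl
  · exact ha₀ (by linarith)
  · exact ha₂ (by linarith)

lemma Int.not_isSquare_27_mul_81_mul_sub_one (n : ℤ) : ¬ IsSquare (27 * (81 * n - 1)) := by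
  rintro ⟨r, hr⟩
  have hmod : (-27 : ZMod 81) = r * r := by
    have h81 : (81 : ZMod 81) = 0 := rfl
    simpa [h81] using congrArg (Int.cast : ℤ → ZMod 81) hr
  revert hmod
  generalize (r : ZMod 81) = s
  revert s
  decide

/-- For every integer `t ≥ 1`, the polynomial `f(X) = X³ − 27tX − 1` is
irreducible over `ℚ`, and its discriminant `−4(−27t)³ − 27(−1)²` equals
`27(2916t³ − 1)`, which is not a perfect square. -/
theorem stmt_11 (t : ℤ) (ht : 1 ≤ t) :
    Irreducible
      ((X ^ 3 - C (27 * t) * X - C 1 : ℤ[X]).map (Int.castRingHom ℚ)) ∧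
    -4 * (-(27 * t)) ^ 3 - 27 * ((-1 : ℤ)) ^ 2 = 27 * (2916 * t ^ 3 - 1) ∧
    ¬ IsSquare (27 * (2916 * t ^ 3 - 1)) := by
  refine ⟨?_, by ring, ?_⟩
  · have hdeg : (X ^ 3 - C (27 * t) * X - C 1 : ℤ[X]).natDegree = 3 := by compute_degree!
    have hmonic : (X ^ 3 - C (27 * t) * X - C 1 : ℤ[X]).Monic := by monicity!
    exact hmonic.irreducible_map_rat_of_forall_not_isRoot (by omega) (by omega)
      (not_isRoot_X_pow_three_sub_C_mul_X_sub_one (by omega) (by omega))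
  · simpa only [show 2916 * t ^ 3 = 81 * (36 * t ^ 3) by ring]
      using Int.not_isSquare_27_mul_81_mul_sub_one (36 * t ^ 3)
end

section
/- Let t ≥ 1 be an integer, let α be a root of the irreducible polynomial f(X) = X³ − 27tX − 1, and let K = ℚ(α). Then no rational prime p is totally ramified in K. -/
/-!
If `p 𝓞_K = P³`, then `[K : ℚ] = 3`, `N(P) = p` and `P` is the only prime above `p`, so the
`P`-adic valuation of an algebraic integer `x` equals `v_p(N(x))`, and every algebraic integer
is congruent to a rational integer modulo `P`. Take `a ∈ ℤ` with `α ≡ a (mod P)` and put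
`β = α - a`, `A = f'(a)`, `B = f(a)`, so that `β³ + 3aβ² + Aβ + B = 0` and `N(β) = -B`; hence
`v_P(B) = 3 v_P(β)`. For `p ≠ 3`, `3a` is a `P`-unit, and comparing the valuations of the four
terms leaves only the case `v_P(Aβ) = v_P(3aβ²)`, which the norm `N(Aβ + B) = B²(B - 3aA)`
excludes. For `p = 3` take `a = 1`: then `N(α - 1) = 27t` and `Aβ` alone has least valuation.
-/

open Polynomial IntermediateField NumberField

theorem not_dvd_card_of_isUnit_natCast {R : Type*} [Ring R] [Finite R] {p : ℕ} (hp : p.Prime)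
    (hu : IsUnit (p : R)) : ¬ p ∣ Nat.card R := by
  intro hdvd
  have : Fact p.Prime := ⟨hp⟩
  have := Fintype.ofFinite R
  obtain ⟨y, hy⟩ := exists_prime_addOrderOf_dvd_card p (Nat.card_eq_fintype_card (α := R) ▸ hdvd)
  have hpy : (p : R) * y = 0 := by rw [← nsmul_eq_mul, ← hy, addOrderOf_nsmul_eq_zero]
  have hy0 : y = 0 := by simpa [hu.mul_right_eq_zero] using hpy
  exact hp.one_lt.ne' (by simpa [hy0] using hy.symm)

theorem AddValuation.add_add_add_ne_zero {R Γ : Type*} [Ring R]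
    [LinearOrderedAddCommMonoidWithTop Γ] (v : AddValuation R Γ) {x y z w : R}
    (hy : v x < v y) (hz : v x < v z) (hw : v x < v w) : x + y + z + w ≠ 0 := by
  intro h
  have hlt : v x < v (y + z + w) :=
    (lt_min (lt_min hy hz) hw).trans_le
      ((min_le_min_right _ (v.map_add y z)).trans (v.map_add (y + z) w))
  have hx := v.map_add_eq_of_lt_left hlt
  rw [← add_assoc, ← add_assoc, h, v.map_zero] at hx
  exact (hx ▸ hy).not_ge le_top

theorem PowerBasis.norm_algebraMap_sub_gen {R S : Type*} [CommRing R] [CommRing S] [Algebra R S]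
    (pb : PowerBasis R S) (c : R) :
    Algebra.norm R (algebraMap R S c - pb.gen) = (minpoly R pb.gen).eval c := by
  rw [← charpoly_leftMulMatrix, Matrix.eval_charpoly, Algebra.norm_eq_matrix_det pb.basis,
    map_sub, AlgHom.commutes]
  rfl

theorem IntermediateField.finrank_eq_natDegree_minpoly_of_adjoin_eq_top {F K : Type*} [Field F]
    [Field K] [Algebra F K] [FiniteDimensional F K] {α : K} (htop : F⟮α⟯ = ⊤) :
    Module.finrank F K = (minpoly F α).natDegree := by
  rw [← adjoin.finrank (.of_finite F α), htop, finrank_top']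

namespace Ideal

section DedekindDomain

variable {S : Type*} [CommRing S] [IsDedekindDomain S]

noncomputable def adicAddValuation (P : Ideal S) (hP : Prime P) : AddValuation S ℕ∞ :=
  AddValuation.of (fun x => emultiplicity P (span {x}))
    (by rw [span_singleton_eq_bot.mpr rfl, ← zero_eq_bot, emultiplicity_zero])
    (by rw [span_singleton_one, ← one_eq_top, emultiplicity_of_one_right hP.not_isUnit])
    (fun x y => ENat.forall_natCast_le_iff_le.mp fun n hn => by
      simp only [le_min_iff, ← pow_dvd_iff_le_emultiplicity, dvd_span_singleton] at hn ⊢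
      exact add_mem hn.1 hn.2)
    (fun x y => by simp only [← span_singleton_mul_span_singleton, emultiplicity_mul hP])

theorem natCast_le_adicAddValuation_iff {P : Ideal S} (hP : Prime P) {x : S} {n : ℕ} :
    (n : ℕ∞) ≤ P.adicAddValuation hP x ↔ x ∈ P ^ n := by
  simp [adicAddValuation, ← pow_dvd_iff_le_emultiplicity, dvd_span_singleton]

end DedekindDomain

section NumberRing

variable {S : Type*} [CommRing S] [IsDedekindDomain S] [Module.Free ℤ S] [Module.Finite ℤ S]
  {p : ℕ} (hp : p.Prime)
include hp

theorem not_dvd_absNorm_of_isCoprime {J : Ideal S} (hJ : J ≠ ⊥)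
    (hJp : IsCoprime J (span {(p : S)})) : ¬ p ∣ absNorm J := by
  have : Finite (S ⧸ J) := (absNorm_ne_zero_iff J).mp (absNorm_eq_zero_iff.not.mpr hJ)
  rw [absNorm_apply, Submodule.cardQuot_apply]
  refine not_dvd_card_of_isUnit_natCast hp ?_
  obtain ⟨j, hj, x, hx, hjx⟩ := isCoprime_iff_exists.mp hJp
  obtain ⟨z, rfl⟩ := mem_span_singleton'.mp hx
  refine IsUnit.of_mul_eq_one (Quotient.mk J z) ?_
  rw [← map_natCast (Quotient.mk J), ← map_mul, mul_comm, ← sub_eq_zero, ← map_one (Quotient.mk J),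
    ← map_sub, Quotient.eq_zero_iff_mem]
  convert J.neg_mem hj using 1
  linear_combination hjx

variable {P : Ideal S} (hP : Prime P) {e : ℕ} (hPe : span {(p : S)} = P ^ e)
  (hNP : absNorm P = p)
include hP hPe hNP

theorem emultiplicity_absNorm (I : Ideal S) :
    emultiplicity p (absNorm I) = emultiplicity P I := by
  rcases eq_or_ne I ⊥ with rfl | hI
  · rw [← zero_eq_bot, map_zero, emultiplicity_zero, emultiplicity_zero]
  obtain ⟨J, hIJ, hPJ⟩ := (FiniteMultiplicity.of_prime_left hP hI).exists_eq_pow_mul_and_not_dvd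
  have hJ : J ≠ ⊥ := by rintro rfl; exact hI (by simpa using hIJ)
  have hJp : IsCoprime J (span {(p : S)}) := by
    have := (isPrime_of_prime hP).isMaximal hP.ne_zero
    rw [hPe, isCoprime_comm]
    refine IsCoprime.pow_left (isCoprime_iff_codisjoint.mpr ?_)
    exact this.out.not_le_iff_codisjoint.mp (mt dvd_iff_le.mpr hPJ)
  rw [hIJ, map_mul, map_pow, hNP, emultiplicity_mul hp.prime, emultiplicity_mul hP,
    emultiplicity_pow_self_of_prime hp.prime, emultiplicity_pow_self_of_prime hP,
    emultiplicity_eq_zero.mpr (not_dvd_absNorm_of_isCoprime hp hJ hJp),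
    emultiplicity_eq_zero.mpr hPJ]

theorem adicAddValuation_eq_emultiplicity_norm (x : S) :
    P.adicAddValuation hP x = emultiplicity (p : ℤ) (Algebra.norm ℤ x) := by
  rw [← Int.emultiplicity_natAbs, ← absNorm_span_singleton, emultiplicity_absNorm hp hP hPe hNP]
  rfl

end NumberRing

theorem exists_intCast_sub_mem {S : Type*} [CommRing S] [IsDedekindDomain S] [Module.Free ℤ S]
    {p : ℕ} (hp : p.Prime) {P : Ideal S} (hNP : absNorm P = p) (x : S) :
    ∃ a : ℤ, x - a ∈ P := by
  have : Finite (S ⧸ P) := (absNorm_ne_zero_iff P).mp (hNP ▸ hp.ne_zero)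
  have := Fintype.ofFinite (S ⧸ P)
  have hcard : Fintype.card (S ⧸ P) = p := by
    rw [← Nat.card_eq_fintype_card, ← Submodule.cardQuot_apply, ← absNorm_apply, hNP]
  obtain ⟨z, hz⟩ := (ZMod.ringEquivOfPrime (S ⧸ P) hp hcard).surjective (Quotient.mk P x)
  obtain ⟨a, rfl⟩ := ZMod.intCast_surjective z
  refine ⟨a, ?_⟩
  rw [← Quotient.eq_zero_iff_mem, map_sub, ← hz, map_intCast, map_intCast, sub_self]

end Ideal

theorem NumberField.absNorm_eq_and_finrank_eq_of_span_eq_pow {K : Type*} [Field K]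
    [NumberField K] {p : ℕ} (hp : p.Prime) {P : Ideal (𝓞 K)} (hP : P ≠ ⊤) {e : ℕ}
    (hPe : Ideal.span {(p : 𝓞 K)} = P ^ e) (he : Module.finrank ℚ K ≤ e) :
    Ideal.absNorm P = p ∧ Module.finrank ℚ K = e := by
  have hn : 0 < Module.finrank ℚ K := Module.finrank_pos
  have hpow : Ideal.absNorm P ^ e = p ^ Module.finrank ℚ K := by
    rw [← map_pow, ← hPe, Ideal.absNorm_span_natCast, RingOfIntegers.rank]
  obtain ⟨i, -, hi⟩ := (Nat.dvd_prime_pow hp).mp (hpow ▸ dvd_pow_self _ (by omega))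
  have hi0 : i ≠ 0 := by
    rintro rfl
    exact hP (Ideal.absNorm_eq_one_iff.mp (by simpa using hi))
  have hie : i * e = Module.finrank ℚ K := by
    apply Nat.pow_right_injective hp.two_le
    simp only [pow_mul, ← hi, hpow]
  obtain rfl : i = 1 := by nlinarith
  exact ⟨by simpa using hi, by simpa using hie.symm⟩

noncomputable def cubicPoly (t : ℤ) : ℚ[X] := X ^ 3 - C (27 * t : ℚ) * X - 1

theorem natDegree_cubicPoly (t : ℤ) : (cubicPoly t).natDegree = 3 := by
  unfold cubicPoly; compute_degree!

theorem monic_cubicPoly (t : ℤ) : (cubicPoly t).Monic := by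
  unfold cubicPoly; monicity!

theorem eval_cubicPoly (t : ℤ) (c : ℚ) : (cubicPoly t).eval c = c ^ 3 - 27 * t * c - 1 := by
  simp [cubicPoly]

theorem isIntegral_of_cubic {A : Type*} [CommRing A] {t : ℤ} {α : A}
    (hroot : α ^ 3 - ((27 * t : ℤ) : A) * α - 1 = 0) : IsIntegral ℤ α :=
  ⟨X ^ 3 - C (27 * t) * X - 1, by monicity!, by
    rwa [eval₂_sub, eval₂_sub, eval₂_mul, eval₂_X_pow, eval₂_X, eval₂_C, eval₂_one,
      algebraMap_int_eq, eq_intCast]⟩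

section CubicField

variable {K : Type*} [Field K] [NumberField K] {t : ℤ} {α : K}
  (hroot : α ^ 3 - ((27 * t : ℤ) : K) * α - 1 = 0)
include hroot

theorem aeval_cubicPoly : aeval α (cubicPoly t) = 0 := by
  simpa [cubicPoly] using hroot

variable (htop : ℚ⟮α⟯ = ⊤)
include htop

theorem finrank_le_three : Module.finrank ℚ K ≤ 3 := by
  rw [finrank_eq_natDegree_minpoly_of_adjoin_eq_top htop, ← natDegree_cubicPoly t]
  exact natDegree_le_of_dvd (minpoly.dvd ℚ α (aeval_cubicPoly hroot)) (monic_cubicPoly t).ne_zero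

variable (h3 : Module.finrank ℚ K = 3)
include h3

theorem minpoly_eq_cubicPoly : minpoly ℚ α = cubicPoly t := by
  refine (eq_of_monic_of_dvd_of_natDegree_le (minpoly.monic (.of_finite ℚ α)) (monic_cubicPoly t)
    (minpoly.dvd ℚ α (aeval_cubicPoly hroot)) ?_).symm
  rw [natDegree_cubicPoly, ← finrank_eq_natDegree_minpoly_of_adjoin_eq_top htop, h3]

theorem cubic_ne_zero (a : ℤ) : a ^ 3 - 27 * t * a - 1 ≠ 0 := by
  intro h
  have hroot' : (minpoly ℚ α).IsRoot (a : ℚ) := by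
    rw [minpoly_eq_cubicPoly hroot htop h3, IsRoot, eval_cubicPoly]
    exact_mod_cast h
  have := natDegree_eq_of_degree_eq_some
    (degree_eq_one_of_irreducible_of_root (minpoly.irreducible (.of_finite ℚ α)) hroot')
  rw [← finrank_eq_natDegree_minpoly_of_adjoin_eq_top htop, h3] at this
  norm_num at this

theorem norm_ratCast_mul_add (r s : ℚ) :
    Algebra.norm ℚ (r * α + s) = s ^ 3 - 27 * t * s * r ^ 2 + r ^ 3 := by
  rcases eq_or_ne r 0 with rfl | hr
  · rw [Rat.cast_zero, zero_mul, zero_add, show (s : K) = algebraMap ℚ K s from rfl,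
      Algebra.norm_algebraMap, h3]
    ring
  have hadj : Algebra.adjoin ℚ {α} = ⊤ := by
    rw [← adjoin_simple_toSubalgebra_of_isAlgebraic (.of_finite ℚ α), htop, top_toSubalgebra]
  let pb := PowerBasis.ofAdjoinEqTop (.of_finite ℚ α) hadj
  have hgen : pb.gen = α := PowerBasis.ofAdjoinEqTop_gen _ _
  have hsplit : (r : K) * α + s = algebraMap ℚ K (-r) * (algebraMap ℚ K (-s / r) - pb.gen) := by
    have hr' : (r : K) ≠ 0 := Rat.cast_ne_zero.mpr hr
    rw [hgen, map_neg, map_div₀, eq_ratCast, eq_ratCast, Rat.cast_neg]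
    field_simp
    ring
  rw [hsplit, map_mul, Algebra.norm_algebraMap, pb.norm_algebraMap_sub_gen, hgen,
    minpoly_eq_cubicPoly hroot htop h3, eval_cubicPoly, h3]
  field_simp
  ring

theorem norm_intCast_mul_add {x : 𝓞 K} (hx : (x : K) = α) (r s : ℤ) :
    Algebra.norm ℤ (r * x + s) = s ^ 3 - 27 * t * s * r ^ 2 + r ^ 3 := by
  subst hx
  apply Int.cast_injective (α := ℚ)
  rw [Algebra.coe_norm_int]
  simpa using norm_ratCast_mul_add hroot htop h3 r s

end CubicField

theorem not_dvd_three_mul_of_dvd_cubic {p : ℕ} (hp : p.Prime) (hp3 : p ≠ 3) {t a : ℤ}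
    (hpf : (p : ℤ) ∣ a ^ 3 - 27 * t * a - 1) : ¬ (p : ℤ) ∣ 3 * a := by
  intro h
  rcases (Nat.prime_iff_prime_int.mp hp).dvd_mul.mp h with h3 | hpa
  · exact hp3 ((Nat.prime_dvd_prime_iff_eq hp Nat.prime_three).mp (by exact_mod_cast h3))
  · have : (p : ℤ) ∣ 1 := by
      rw [show (1 : ℤ) = a * (a ^ 2 - 27 * t) - (a ^ 3 - 27 * t * a - 1) by ring]
      exact dvd_sub (dvd_mul_of_dvd_left hpa _) hpf
    exact hp.one_lt.ne' (by exact_mod_cast Int.eq_one_of_dvd_one (by positivity) this)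

section NormValuation

variable {S : Type*} [CommRing S] {t : ℤ} {α : S}
  (hN : ∀ r s : ℤ, Algebra.norm ℤ (r * α + s) = s ^ 3 - 27 * t * s * r ^ 2 + r ^ 3)
include hN

theorem norm_sub_intCast (a : ℤ) : Algebra.norm ℤ (α - a) = -(a ^ 3 - 27 * t * a - 1) := by
  rw [show α - a = ((1 : ℤ) : S) * α + ((-a : ℤ) : S) by push_cast; ring, hN]
  ring

theorem norm_mul_sub_intCast_add (a : ℤ) :
    Algebra.norm ℤ (((3 * a ^ 2 - 27 * t : ℤ) : S) * (α - a) + ((a ^ 3 - 27 * t * a - 1 : ℤ) : S)) =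
      (a ^ 3 - 27 * t * a - 1) ^ 2 * (a ^ 3 - 27 * t * a - 1 - 3 * a * (3 * a ^ 2 - 27 * t)) := by
  rw [show ((3 * a ^ 2 - 27 * t : ℤ) : S) * (α - a) + ((a ^ 3 - 27 * t * a - 1 : ℤ) : S) =
    ((3 * a ^ 2 - 27 * t : ℤ) : S) * α + ((-2 * a ^ 3 - 1 : ℤ) : S) by push_cast; ring, hN]
  ring

variable {p : ℕ} {v : AddValuation S ℕ∞} (hv : ∀ x, v x = emultiplicity (p : ℤ) (Algebra.norm ℤ x))
include hv

theorem map_intCast_eq_three_mul_emultiplicity (hp : p.Prime) (n : ℤ) :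
    v n = 3 * emultiplicity (p : ℤ) n := by
  rw [hv, show (n : S) = ((0 : ℤ) : S) * α + n by simp, hN]
  simpa using emultiplicity_pow (Nat.prime_iff_prime_int.mp hp) (a := n) (k := 3)

theorem lt_map_mul_sub_intCast_add {a : ℤ} {m : ℕ} (hm0 : m ≠ 0)
    (hpmB : (p : ℤ) ^ m ∣ a ^ 3 - 27 * t * a - 1) (hpA : (p : ℤ) ∣ 3 * a ^ 2 - 27 * t) :
    ((2 * m : ℕ) : ℕ∞) <
      v (((3 * a ^ 2 - 27 * t : ℤ) : S) * (α - a) + ((a ^ 3 - 27 * t * a - 1 : ℤ) : S)) := by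
  have hpB := (dvd_pow_self _ hm0).trans hpmB
  rw [hv, norm_mul_sub_intCast_add hN, ← ENat.add_one_le_iff (ENat.natCast_ne_top _)]
  refine le_emultiplicity_of_pow_dvd (k := 2 * m + 1) ?_
  rw [pow_succ, pow_mul']
  exact mul_dvd_mul (pow_dvd_pow_of_dvd hpmB 2) (dvd_sub hpB (dvd_mul_of_dvd_right hpA _))

variable (hα : α ^ 3 - 27 * t * α - 1 = 0)
include hα

theorem eq_zero_of_prime_eq_three (hp : p = 3) : t = 0 := by
  subst hp
  by_contra ht
  have hvint := map_intCast_eq_three_mul_emultiplicity hN hv Nat.prime_three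
  set β := α - 1
  have hNβ : Algebra.norm ℤ β = 27 * t := by
    simpa using norm_sub_intCast hN 1
  obtain ⟨m, hm⟩ : ∃ m : ℕ, v β = m :=
    ⟨_, (hv β).trans (FiniteMultiplicity.of_prime_left (Nat.prime_iff_prime_int.mp Nat.prime_three)
      (by rw [hNβ]; positivity)).emultiplicity_eq_multiplicity⟩
  have hm3 : 3 ≤ m := by
    have : ((3 : ℕ) : ℕ∞) ≤ v β := by
      rw [hv, hNβ]
      exact le_emultiplicity_of_pow_dvd (Dvd.intro t (by norm_num))
    exact_mod_cast hm ▸ this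
  have hv27t : v ((27 * t : ℤ) : S) = 3 * m := by rw [hvint, ← hNβ, ← hv, hm]
  have hv3 : v (3 : S) = 3 := by
    rw [show (3 : S) = ((3 : ℤ) : S) by norm_num, hvint,
      (emultiplicity_eq_coe (n := 1)).mpr (by norm_num)]
    norm_num
  have hvA : v ((3 - 27 * t : ℤ) : S) = 3 := by
    rw [hvint, (emultiplicity_eq_coe (n := 1)).mpr ⟨by norm_num; omega, by norm_num; omega⟩]
    norm_num
  refine v.add_add_add_ne_zero (x := ((3 - 27 * t : ℤ) : S) * β) (y := β ^ 3) (z := 3 * β ^ 2)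
    (w := -((27 * t : ℤ) : S)) ?_ ?_ ?_ (by push_cast; linear_combination hα)
  all_goals
    simp only [v.map_mul, v.map_pow, v.map_neg, nsmul_eq_mul, hm, hvA, hv3, hv27t]
    norm_cast
    omega

theorem map_sub_intCast_eq_zero (hp : p.Prime) (hp3 : p ≠ 3) {a : ℤ}
    (hf : a ^ 3 - 27 * t * a - 1 ≠ 0) : v (α - a) = 0 := by
  have hvint := map_intCast_eq_three_mul_emultiplicity hN hv hp
  set A := 3 * a ^ 2 - 27 * t with hA
  set B := a ^ 3 - 27 * t * a - 1 with hB
  set β := α - a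
  have hvβ : v β = emultiplicity (p : ℤ) B := by rw [hv, norm_sub_intCast hN, emultiplicity_neg]
  obtain ⟨m, hm⟩ : ∃ m : ℕ, v β = m :=
    ⟨_, hvβ.trans (FiniteMultiplicity.of_prime_left (Nat.prime_iff_prime_int.mp hp)
      hf).emultiplicity_eq_multiplicity⟩
  rw [hm, Nat.cast_eq_zero]
  by_contra hm0
  have hpmB : (p : ℤ) ^ m ∣ B := pow_dvd_of_le_emultiplicity (hvβ ▸ hm ▸ le_rfl)
  have hvB : v (B : S) = 3 * m := by rw [hvint, ← hvβ, hm]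
  have hv3aβ : v (((3 * a : ℤ) : S) * β ^ 2) = 2 * m := by
    rw [v.map_mul, v.map_pow, hvint,
      emultiplicity_eq_zero.mpr
        (not_dvd_three_mul_of_dvd_cubic hp hp3 ((dvd_pow_self _ hm0).trans hpmB)), hm]
    simp
  rcases lt_trichotomy (v ((A : S) * β)) (v (((3 * a : ℤ) : S) * β ^ 2)) with hlt | heq | hgt
  · refine v.add_add_add_ne_zero (y := β ^ 3) (z := ((3 * a : ℤ) : S) * β ^ 2) (w := (B : S))
      (hlt.trans_le ?_) hlt (hlt.trans_le ?_) (by push_cast [hA, hB]; linear_combination hα)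
    all_goals
      simp only [v.map_pow, nsmul_eq_mul, hv3aβ, hvB, hm]
      norm_cast
      omega
  · -- `Aβ` and `3aβ²` may cancel; the norm of `Aβ + B` shows that they do not.
    have hpA : (p : ℤ) ∣ A := by
      by_contra hpA
      rw [v.map_mul, hvint, emultiplicity_eq_zero.mpr hpA, hv3aβ, hm] at heq
      norm_cast at heq
      omega
    have hξ : ((2 * m : ℕ) : ℕ∞) < v ((A : S) * β + B) :=
      lt_map_mul_sub_intCast_add hN hv hm0 hpmB hpA
    rw [v.map_add_eq_of_lt_left (by rw [heq, hv3aβ, hvB]; norm_cast; omega), heq, hv3aβ] at hξ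
    norm_cast at hξ
    omega
  · refine v.add_add_add_ne_zero (y := β ^ 3) (z := (A : S) * β) (w := (B : S))
      ?_ hgt ?_ (by push_cast [hA, hB]; linear_combination hα)
    all_goals
      simp only [v.map_pow, nsmul_eq_mul, hv3aβ, hvB, hm]
      norm_cast
      omega

end NormValuation

theorem stmt_12_general (t : ℤ)
    (K : Type) [Field K] [NumberField K] (α : K)
    (hroot : α ^ 3 - ((27 * t : ℤ) : K) * α - 1 = 0)
    (htop : IntermediateField.adjoin ℚ {α} = ⊤) :
    ∀ p : ℕ, p.Prime →
      ¬ ∃ P : Ideal (𝓞 K), P.IsPrime ∧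
          Ideal.span {(p : 𝓞 K)} = P ^ 3 := by
  rintro p hp ⟨P, hPp, hP3⟩
  obtain ⟨hNP, h3⟩ := absNorm_eq_and_finrank_eq_of_span_eq_pow hp hPp.ne_top hP3
    (finrank_le_three hroot htop)
  have hP : Prime P :=
    Ideal.prime_of_isPrime (fun h => hp.ne_zero (by simpa [h] using hNP.symm)) hPp
  have hv := P.adicAddValuation_eq_emultiplicity_norm hp hP hP3 hNP
  obtain ⟨x, rfl⟩ : ∃ x : 𝓞 K, (x : K) = α := ⟨⟨α, isIntegral_of_cubic hroot⟩, rfl⟩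
  have hx : x ^ 3 - 27 * t * x - 1 = 0 := by
    apply RingOfIntegers.coe_injective
    push_cast at hroot ⊢
    exact hroot
  have hN := norm_intCast_mul_add hroot htop h3 (x := x) rfl
  rcases eq_or_ne p 3 with rfl | hp3
  · exact cubic_ne_zero hroot htop h3 1 (by simp [eq_zero_of_prime_eq_three hN hv hx rfl])
  · obtain ⟨a, ha⟩ := P.exists_intCast_sub_mem hp hNP x
    have h1 := (P.natCast_le_adicAddValuation_iff hP (n := 1)).mpr (by simpa using ha)
    simp [map_sub_intCast_eq_zero hN hv hx hp hp3 (cubic_ne_zero hroot htop h3 a)] at h1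

/-- Let `t ≥ 1` be an integer, let `α` be a root of the irreducible polynomial
`f(X) = X³ − 27tX − 1`, and let `K = ℚ(α)`.  Then no rational prime `p` is
totally ramified in `K` (i.e. there is no prime ideal `P` of `𝓞 K` with
`p·𝓞 K = P³`). -/
theorem stmt_12 (t : ℤ) (ht : 1 ≤ t)
    (K : Type) [Field K] [NumberField K] (α : K)
    (hroot : α ^ 3 - ((27 * t : ℤ) : K) * α - 1 = 0)
    (htop : IntermediateField.adjoin ℚ {α} = ⊤) :
    ∀ p : ℕ, p.Prime →
      ¬ ∃ P : Ideal (𝓞 K), P.IsPrime ∧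
          Ideal.span {(p : 𝓞 K)} = P ^ 3 :=
  stmt_12_general t K α hroot htop
end

section
/- For every integer t ≥ 1 with t ≢ 0 (mod 3), the class number of the imaginary quadratic field ℚ(√(−t(3888t² + 108t + 1))) is divisible by 3. -/
/-!
Put `d = t(3888t² + 108t + 1)`. Then `(1 + 18√-d)(1 - 18√-d) = 1 + 324d = (108t + 1)³` with coprime
factors, so the ideal `(1 + 18√-d)` is a cube `I³`. If `3 ∤ h_K` then `I` is principal. As `3 ∤ d`,
every unit of `K` is a fourth root of unity, hence a cube, so `1 + 18√-d = (s + r√-d)³` for an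
integral `s + r√-d`. The trace `X = 2s` and `D = 4dr²` are then integers with `X³ - 3XD = 8`, which
forces `D ∈ {3, 6, 21}`: `d(2r)²` would have odd `3`-adic valuation although `3 ∤ d`.
-/

open Polynomial IntermediateField NumberField

theorem mul_sq_ne_three_mul {d c : ℤ} (hd : ¬ 3 ∣ d) (hc : ¬ 3 ∣ c) (ρ : ℚ) :
    (d : ℚ) * ρ ^ 2 ≠ 3 * c := by
  have : Fact (Nat.Prime 3) := ⟨Nat.prime_three⟩
  have hd0 : (d : ℚ) ≠ 0 := Int.cast_ne_zero.2 <| by rintro rfl; exact hd (dvd_zero 3)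
  have hc0 : (c : ℚ) ≠ 0 := Int.cast_ne_zero.2 <| by rintro rfl; exact hc (dvd_zero 3)
  intro h
  have hρ : ρ ≠ 0 := by rintro rfl; simp_all
  have hv := congrArg (padicValRat 3) h
  rw [padicValRat.mul hd0 (pow_ne_zero 2 hρ), padicValRat.mul three_ne_zero hc0,
    padicValRat.pow, padicValRat.of_int, padicValRat.of_int,
    padicValInt.eq_zero_of_not_dvd hd, padicValInt.eq_zero_of_not_dvd hc] at hv
  push_cast at hv
  rw [show padicValRat 3 3 = 1 by exact_mod_cast padicValRat.self (p := 3) (by norm_num)] at hv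
  omega

theorem not_three_dvd_mul_of_not_three_dvd {t : ℤ} (ht3 : ¬ 3 ∣ t) :
    ¬ 3 ∣ t * (3888 * t ^ 2 + 108 * t + 1) := by
  have h3 : (3 : ℤ) ∣ 3888 * t ^ 2 + 108 * t := ⟨1296 * t ^ 2 + 36 * t, by ring⟩
  rw [Int.prime_three.dvd_mul, Int.dvd_add_right h3]
  rintro (h | h)
  exacts [ht3 h, by norm_num at h]

theorem eq_three_or_six_or_twentyOne_of_pow_three_sub_eq_eight {X D : ℤ} (hD : 0 < D)
    (h : X ^ 3 - 3 * X * D = 8) : D = 3 ∨ D = 6 ∨ D = 21 := by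
  have hX : X ∣ 8 := ⟨X ^ 2 - 3 * D, by linear_combination -h⟩
  obtain ⟨hge, hle⟩ := abs_le.1 (Int.le_of_dvd (by norm_num) ((abs_dvd X 8).2 hX))
  interval_cases X <;> omega

theorem exists_eq_unit_mul_pow_of_mul_eq_pow {R : Type*} [CommRing R] [IsDedekindDomain R]
    [Fintype (ClassGroup R)] {n : ℕ} (hn : n.Coprime (Fintype.card (ClassGroup R)))
    {a b c : R} (hab : IsCoprime a b) (h : a * b = c ^ n) :
    ∃ (γ : R) (u : Rˣ), γ ^ n * u = a := by
  obtain ⟨I, hI⟩ := exists_eq_pow_of_mul_eq_pow_of_coprime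
    ((Ideal.isCoprime_span_singleton_iff a b).2 hab)
    (by rw [Ideal.span_singleton_mul_span_singleton, h, Ideal.span_singleton_pow])
  have hIn : (I ^ n).IsPrincipal := hI ▸ ⟨a, rfl⟩
  obtain ⟨γ, rfl⟩ := (Ideal.IsPrincipal.of_isPrincipal_pow_of_coprime hn hIn).principal
  rw [Ideal.submodule_span_eq, Ideal.span_singleton_pow, Ideal.span_singleton_eq_span_singleton] at hI
  exact ⟨γ, hI.symm⟩

theorem minpoly_eq_of_monic_of_natDegree_eq_two {F L : Type*} [Field F] [Field L] [Algebra F L]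
    {x : L} {P : F[X]} (hP : P.Monic) (hdeg : P.natDegree = 2) (hx : aeval x P = 0)
    (hxF : x ∉ (algebraMap F L).range) : minpoly F x = P := by
  have hint : IsIntegral F x := ⟨P, hP, hx⟩
  refine eq_of_dvd_of_natDegree_le_of_leadingCoeff (minpoly.dvd F x hx) ?_ ?_
  · exact hdeg ▸ (minpoly.two_le_natDegree_iff hint).2 hxF
  · rw [(minpoly.monic hint).leadingCoeff, hP.leadingCoeff]

section ImaginaryQuadratic

variable {K : Type*} [Field K] {d : ℤ} {z : K}

theorem isIntegral_of_sq_eq_neg_intCast (hz : z ^ 2 = -d) : IsIntegral ℤ z :=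
  ⟨X ^ 2 + C d, monic_X_pow_add_C _ two_ne_zero, by
    rw [eval₂_add, eval₂_X_pow, eval₂_C, hz]; simp⟩

variable [CharZero K]

theorem ratCast_ne_of_sq_eq_neg (hd : 0 < d) (hz : z ^ 2 = -d) (r : ℚ) : (r : K) ≠ z := by
  rintro rfl
  have : r ^ 2 + d = 0 := by exact_mod_cast (by rw [hz]; ring : (r : K) ^ 2 + d = 0)
  have : (0 : ℚ) < d := by exact_mod_cast hd
  nlinarith

theorem ratCast_add_mul_inj (hd : 0 < d) (hz : z ^ 2 = -d) {a b a' b' : ℚ}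
    (h : (a : K) + b * z = a' + b' * z) : a = a' ∧ b = b' := by
  obtain rfl | hb := eq_or_ne b b'
  · exact ⟨by exact_mod_cast add_right_cancel h, rfl⟩
  refine absurd ?_ (ratCast_ne_of_sq_eq_neg hd hz ((a' - a) / (b - b')))
  rw [Rat.cast_div, div_eq_iff (by exact_mod_cast sub_ne_zero.2 hb)]
  push_cast
  linear_combination -h

theorem exists_eq_ratCast_add_mul (hz : z ^ 2 = -d) (hadj : ℚ⟮z⟯ = ⊤) (x : K) :
    ∃ a b : ℚ, x = a + b * z := by
  set q : ℚ[X] := X ^ 2 + C (d : ℚ)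
  have hmonic : q.Monic := monic_X_pow_add_C _ two_ne_zero
  have hroot : aeval z q = 0 := by simp [q, hz]
  rw [adjoin_simple_eq_top_iff_of_isAlgebraic ⟨_, hmonic.ne_zero, hroot⟩,
    Algebra.adjoin_singleton_eq_range_aeval] at hadj
  obtain ⟨p, hp⟩ : x ∈ (aeval z).range := hadj ▸ Algebra.mem_top
  have hdeg : (p %ₘ q).degree ≤ 1 := by
    have := degree_modByMonic_lt p hmonic
    rw [degree_X_pow_add_C two_pos] at this
    exact Order.le_of_lt_succ this
  refine ⟨(p %ₘ q).coeff 0, (p %ₘ q).coeff 1, ?_⟩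
  rw [← hp, AlgHom.toRingHom_eq_coe, RingHom.coe_coe, ← aeval_modByMonic_eq_self_of_root hroot,
    eq_X_add_C_of_degree_le_one hdeg]
  simp [add_comm]

theorem exists_int_eq_trace_and_norm (hd : 0 < d) (hz : z ^ 2 = -d) {x : K}
    (hx : IsIntegral ℤ x) {a b : ℚ} (hxab : x = a + b * z) :
    ∃ T N : ℤ, (T : ℚ) = 2 * a ∧ (N : ℚ) = a ^ 2 + d * b ^ 2 := by
  obtain rfl | hb := eq_or_ne b 0
  · have ha : IsIntegral ℤ a := by
      rw [← isIntegral_algebraMap_iff (algebraMap ℚ K).injective, eq_ratCast]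
      simpa [hxab] using hx
    obtain ⟨n, rfl⟩ := IsIntegrallyClosed.isIntegral_iff.mp ha
    exact ⟨2 * n, n ^ 2, by simp, by simp⟩
  obtain ⟨N, hN⟩ : ∃ N : ℚ, N = a ^ 2 + d * b ^ 2 := ⟨_, rfl⟩
  have hP : (X ^ 2 - C (2 * a) * X + C N).Monic := by monicity!
  have hPx : aeval x (X ^ 2 - C (2 * a) * X + C N) = 0 := by
    simp only [map_add, map_sub, map_mul, map_pow, aeval_X, aeval_C, eq_ratCast, hxab, hN]
    push_cast
    linear_combination (b : K) ^ 2 * hz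
  have hxQ : x ∉ (algebraMap ℚ K).range := by
    rintro ⟨r, hr⟩
    rw [eq_ratCast, hxab, ← add_zero (r : K), ← zero_mul z, ← Rat.cast_zero] at hr
    exact hb (ratCast_add_mul_inj hd hz hr).2.symm
  have hmin : (minpoly ℤ x).map (algebraMap ℤ ℚ) = X ^ 2 - C (2 * a) * X + C N := by
    rw [← minpoly.isIntegrallyClosed_eq_field_fractions' ℚ hx]
    exact minpoly_eq_of_monic_of_natDegree_eq_two hP (by compute_degree!) hPx hxQ
  refine ⟨-(minpoly ℤ x).coeff 1, (minpoly ℤ x).coeff 0, ?_, hN ▸ ?_⟩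
  · have h1 : ((minpoly ℤ x).coeff 1 : ℚ) = -(2 * a) := by
      simpa [coeff_C] using congrArg (coeff · 1) hmin
    rw [Int.cast_neg, h1, neg_neg]
  · simpa [coeff_X, coeff_C] using congrArg (coeff · 0) hmin

theorem sq_add_mul_sq_eq_one_of_unit (hd : 0 < d) (hz : z ^ 2 = -d) (hadj : ℚ⟮z⟯ = ⊤)
    (u : (𝓞 K)ˣ) {p q : ℚ} (hu : ((u : 𝓞 K) : K) = p + q * z) : p ^ 2 + d * q ^ 2 = 1 := by
  obtain ⟨p', q', hu'⟩ := exists_eq_ratCast_add_mul hz hadj (((u⁻¹ : (𝓞 K)ˣ) : 𝓞 K) : K)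
  obtain ⟨-, N, -, hN⟩ := exists_int_eq_trace_and_norm hd hz (u : 𝓞 K).isIntegral_coe hu
  obtain ⟨-, N', -, hN'⟩ := exists_int_eq_trace_and_norm hd hz (↑u⁻¹ : 𝓞 K).isIntegral_coe hu'
  obtain ⟨hre, him⟩ := ratCast_add_mul_inj (a := p * p' - d * q * q') (b := p * q' + q * p')
    (a' := 1) (b' := 0) hd hz <| by
      have : ((u : 𝓞 K) : K) * (((u⁻¹ : (𝓞 K)ˣ) : 𝓞 K) : K) = 1 := by
        rw [← map_mul, u.mul_inv, map_one]
      rw [hu, hu'] at this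
      push_cast
      linear_combination this - (q : K) * q' * hz
  have hNN : N * N' = 1 := by
    exact_mod_cast (by
      push_cast
      rw [hN, hN']
      linear_combination (p * p' - d * q * q' + 1) * hre + d * (p * q' + q * p') * him :
      ((N * N' : ℤ) : ℚ) = 1)
  have hN0 : 0 ≤ N := by
    have : (0 : ℚ) < d := by exact_mod_cast hd
    exact_mod_cast hN ▸ (by positivity : (0 : ℚ) ≤ p ^ 2 + d * q ^ 2)
  rw [← hN, Int.eq_one_of_mul_eq_one_right hN0 hNN, Int.cast_one]

theorem unit_pow_four_eq_one (hd : 0 < d) (hd3 : ¬ 3 ∣ d) (hz : z ^ 2 = -d)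
    (hadj : ℚ⟮z⟯ = ⊤) (u : (𝓞 K)ˣ) : u ^ 4 = 1 := by
  obtain ⟨p, q, hu⟩ := exists_eq_ratCast_add_mul hz hadj ((u : 𝓞 K) : K)
  obtain ⟨T, -, hT, -⟩ := exists_int_eq_trace_and_norm hd hz (u : 𝓞 K).isIntegral_coe hu
  have hpq := sq_add_mul_sq_eq_one_of_unit hd hz hadj u hu
  have hdq : (0 : ℚ) < d := by exact_mod_cast hd
  -- `(2p)² + d(2q)² = 4` with `2p ∈ ℤ`, so `pq ≠ 0` would give `d(2q)² = 3`.
  have hpq0 : p * q = 0 := by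
    by_contra h
    obtain ⟨hp, hq⟩ := mul_ne_zero_iff.1 h
    have hT1 : T ^ 2 = 1 := by
      have h0 : 0 < T ^ 2 := by exact_mod_cast (by rw [hT]; positivity : (0 : ℚ) < T ^ 2)
      have h4 : T ^ 2 < 4 := by
        exact_mod_cast (by rw [hT]; nlinarith [pow_pos hdq 1, sq_pos_of_ne_zero hq] :
          (T : ℚ) ^ 2 < 4)
      obtain ⟨hlo, hhi⟩ : -2 < T ∧ T < 2 := ⟨by nlinarith, by nlinarith⟩
      interval_cases T <;> omega
    exact mul_sq_ne_three_mul (c := 1) hd3 (by norm_num) (2 * q) <| by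
      have : (T : ℚ) ^ 2 = 1 := by exact_mod_cast hT1
      rw [hT] at this
      linear_combination 4 * hpq - this
  have hK : ((u : 𝓞 K) : K) ^ 4 = 1 := by
    have hpqK : (p : K) ^ 2 + d * (q : K) ^ 2 = 1 := by exact_mod_cast hpq
    rcases mul_eq_zero.1 hpq0 with rfl | rfl <;> simp only [Rat.cast_zero] at hpqK <;> rw [hu]
    · linear_combination (q : K) ^ 4 * (z ^ 2 - d) * hz + (d * (q : K) ^ 2 + 1) * hpqK
    · linear_combination ((p : K) ^ 2 + 1) * hpqK
  exact Units.ext <| RingOfIntegers.ext <| by simpa using hK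

theorem pow_three_ne_one_add_eighteen_mul (hd : 0 < d) (hd3 : ¬ 3 ∣ d) (hz : z ^ 2 = -d)
    (hadj : ℚ⟮z⟯ = ⊤) {x : K} (hx : IsIntegral ℤ x) : x ^ 3 ≠ 1 + 18 * z := by
  intro h
  obtain ⟨s, r, rfl⟩ := exists_eq_ratCast_add_mul hz hadj x
  obtain ⟨X, N, hX, hN⟩ := exists_int_eq_trace_and_norm hd hz hx rfl
  obtain ⟨hre, him⟩ := ratCast_add_mul_inj (a := s ^ 3 - 3 * d * s * r ^ 2)
    (b := 3 * s ^ 2 * r - d * r ^ 3) (a' := 1) (b' := 18) hd hz <| by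
      push_cast
      linear_combination h - (3 * (s : K) * r ^ 2 + r ^ 3 * z) * hz
  have hr : r ≠ 0 := by rintro rfl; norm_num at him
  obtain ⟨D, hD⟩ : ∃ D : ℤ, (D : ℚ) = d * (2 * r) ^ 2 :=
    ⟨4 * N - X ^ 2, by push_cast; rw [hN, hX]; ring⟩
  have hD0 : 0 < D := by
    have : (0 : ℚ) < d := by exact_mod_cast hd
    exact_mod_cast (hD ▸ by positivity : (0 : ℚ) < D)
  have hcubic : X ^ 3 - 3 * X * D = 8 := by
    exact_mod_cast (by push_cast; rw [hD, hX]; linear_combination 8 * hre :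
      ((X ^ 3 - 3 * X * D : ℤ) : ℚ) = 8)
  have key : ∀ c : ℤ, ¬ 3 ∣ c → D ≠ 3 * c := fun c hc hDc =>
    mul_sq_ne_three_mul hd3 hc (2 * r) (by rw [← hD, hDc]; push_cast; ring)
  obtain h | h | h := eq_three_or_six_or_twentyOne_of_pow_three_sub_eq_eight hD0 hcubic
  · exact key 1 (by norm_num) h
  · exact key 2 (by norm_num) h
  · exact key 7 (by norm_num) h

end ImaginaryQuadratic

/-- For every integer `t ≥ 1` with `t ≢ 0 (mod 3)`, the class number of the
imaginary quadratic field `ℚ(√(−t(3888t² + 108t + 1)))` is divisible by `3`.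
The quadratic field is encoded as any number field `K` generated over `ℚ` by a
square root `z` of `−t(3888t² + 108t + 1)`. -/
theorem stmt_14 (t : ℤ) (ht : 1 ≤ t) (ht3 : ¬ (3 : ℤ) ∣ t) :
    ∀ (K : Type) [Field K] [NumberField K] (z : K),
      z ^ 2 = ((-(t * (3888 * t ^ 2 + 108 * t + 1)) : ℤ) : K) →
      IntermediateField.adjoin ℚ {z} = ⊤ →
      3 ∣ NumberField.classNumber K := by
  intro K _ _ z hz hadj
  obtain ⟨d, hd_def⟩ : ∃ d : ℤ, d = t * (3888 * t ^ 2 + 108 * t + 1) := ⟨_, rfl⟩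
  rw [← hd_def, Int.cast_neg] at hz
  have hd : 0 < d := hd_def ▸ mul_pos (by omega) (by nlinarith)
  have hd3 : ¬ 3 ∣ d := hd_def ▸ not_three_dvd_mul_of_not_three_dvd ht3
  let ζ : 𝓞 K := ⟨z, isIntegral_of_sq_eq_neg_intCast hz⟩
  have hζz : (ζ : K) = z := rfl
  have hζ : ζ ^ 2 = -d := RingOfIntegers.ext <| by push_cast [hζz]; exact hz
  have hcop : IsCoprime (1 + 18 * ζ) (1 - 18 * ζ) :=
    ⟨1 - 18 * ζ + 162 * ζ ^ 2, 162 * ζ ^ 2, by ring⟩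
  have hprod : (1 + 18 * ζ) * (1 - 18 * ζ) = ((108 * t + 1 : ℤ) : 𝓞 K) ^ 3 := by
    rw [hd_def] at hζ
    push_cast at hζ ⊢
    linear_combination (-324) * hζ
  by_contra h3
  obtain ⟨γ, u, hγ⟩ := exists_eq_unit_mul_pow_of_mul_eq_pow
    ((Nat.Prime.coprime_iff_not_dvd Nat.prime_three).2 h3) hcop hprod
  have hu : (u ^ 3) ^ 3 = u := by
    rw [← pow_mul, show 3 * 3 = 4 * 2 + 1 by rfl, pow_succ, pow_mul,
      unit_pow_four_eq_one hd hd3 hz hadj, one_pow, one_mul]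
  have hcube : (γ * ↑(u ^ 3)) ^ 3 = 1 + 18 * ζ := by
    rw [mul_pow, ← Units.val_pow_eq_pow_val, hu, hγ]
  exact pow_three_ne_one_add_eighteen_mul hd hd3 hz hadj (γ * ↑(u ^ 3)).isIntegral_coe <| by
    rw [← hζz, ← map_pow, hcube, map_add, map_mul, map_one, map_ofNat]
end
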